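/- Assume α + β ≤ 1/(n−1) and set γ_* = 1 − (α + β)(n−1). Let i ∈ V and suppose |s_i(t)| ≤ ζ_0·M(t) for some 0 < ζ_0 < 1. Then for every realization of the neighbor sets and attention values at times t, t+1, …, one has |s_i(t+k)| ≤ (1 − (1 − ζ_0)·γ_*^k)·M(t) for all k = 0, 1, 2, …. -/

import Mathlib

/-!
Each node's update is a convex combination of its own state (weight `1 - θ`) and of `±` the states
of its neighbours (total weight `θ = α B |N⁺| + β D |N⁻| ≤ 1 - γ_*`). Hence, if all states are
bounded by `M`, a node with `|s| ≤ ζ M` moves to `|s| ≤ (1 - θ) ζ M + θ M ≤ (1 - (1 - ζ) γ_*) M`.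
Taking `ζ = 1` shows `M` stays a bound, and iterating `1 - ζ ↦ γ_* (1 - ζ)` gives the claim.
-/

open Finset

/-- The maximum absolute state `M = max_{i ∈ V} |x i|`. -/
noncomputable def Mmax {n : ℕ} (hn : 3 ≤ n) (x : Fin n → ℝ) : ℝ :=
  Finset.univ.sup' ⟨⟨0, by omega⟩, Finset.mem_univ _⟩ fun i => |x i|

lemma abs_le_Mmax {n : ℕ} (hn : 3 ≤ n) (x : Fin n → ℝ) (j : Fin n) : |x j| ≤ Mmax hn x :=
  le_sup' (fun i => |x i|) (mem_univ j)

noncomputable def flipStep {ι : Type*} (a b : ℝ) (Sp Sd : Finset ι) (x : ι → ℝ) (p : ι) : ℝ :=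
  x p - a * ∑ j ∈ Sp, (x p - x j) - b * ∑ j ∈ Sd, (x p + x j)

section FlipStep

variable {ι : Type*} {a b M : ℝ} {Sp Sd : Finset ι} {x : ι → ℝ} {p : ι}

lemma flipStep_eq (a b : ℝ) (Sp Sd : Finset ι) (x : ι → ℝ) (p : ι) :
    flipStep a b Sp Sd x p =
      (1 - (a * #Sp + b * #Sd)) * x p + a * ∑ j ∈ Sp, x j - b * ∑ j ∈ Sd, x j := by
  simp only [flipStep, sum_sub_distrib, sum_add_distrib, sum_const, nsmul_eq_mul]
  ring

lemma abs_sum_le_card_mul {S : Finset ι} (hx : ∀ j, |x j| ≤ M) : |∑ j ∈ S, x j| ≤ #S * M :=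
  calc |∑ j ∈ S, x j| ≤ ∑ j ∈ S, |x j| := abs_sum_le_sum_abs _ _
    _ ≤ ∑ _j ∈ S, M := sum_le_sum fun j _ => hx j
    _ = #S * M := by rw [sum_const, nsmul_eq_mul]

lemma abs_flipStep_le (ha : 0 ≤ a) (hb : 0 ≤ b) (hθ : a * #Sp + b * #Sd ≤ 1)
    (hx : ∀ j, |x j| ≤ M) :
    |flipStep a b Sp Sd x p| ≤ (1 - (a * #Sp + b * #Sd)) * |x p| + (a * #Sp + b * #Sd) * M := by
  have hp : |(1 - (a * #Sp + b * #Sd)) * x p| = (1 - (a * #Sp + b * #Sd)) * |x p| := by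
    rw [abs_mul, abs_of_nonneg (sub_nonneg.mpr hθ)]
  have hSp : |a * ∑ j ∈ Sp, x j| ≤ a * (#Sp * M) := by
    rw [abs_mul, abs_of_nonneg ha]
    exact mul_le_mul_of_nonneg_left (abs_sum_le_card_mul hx) ha
  have hSd : |b * ∑ j ∈ Sd, x j| ≤ b * (#Sd * M) := by
    rw [abs_mul, abs_of_nonneg hb]
    exact mul_le_mul_of_nonneg_left (abs_sum_le_card_mul hx) hb
  rw [flipStep_eq]
  calc _ ≤ |(1 - (a * #Sp + b * #Sd)) * x p| + |a * ∑ j ∈ Sp, x j| + |b * ∑ j ∈ Sd, x j| :=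
        (abs_sub _ _).trans (by gcongr; exact abs_add_le _ _)
    _ ≤ _ := by linarith

lemma abs_flipStep_le_of_abs_le {ζ γ : ℝ} (ha : 0 ≤ a) (hb : 0 ≤ b) (hγ : 0 ≤ γ)
    (hθ : a * #Sp + b * #Sd ≤ 1 - γ) (hx : ∀ j, |x j| ≤ M) (hxp : |x p| ≤ ζ * M) (hζ : ζ ≤ 1) :
    |flipStep a b Sp Sd x p| ≤ (1 - (1 - ζ) * γ) * M := by
  have hM : 0 ≤ M := (abs_nonneg _).trans (hx p)
  have hθ0 : 0 ≤ a * #Sp + b * #Sd := by positivity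
  have hown := mul_le_mul_of_nonneg_left hxp (by linarith : 0 ≤ 1 - (a * #Sp + b * #Sd))
  nlinarith [abs_flipStep_le (Sp := Sp) (Sd := Sd) (p := p) ha hb (by linarith) hx,
    mul_nonneg (mul_nonneg (sub_nonneg.mpr hζ) hM) (by linarith : 0 ≤ 1 - γ - (a * #Sp + b * #Sd))]

end FlipStep

lemma mul_mul_card_le_of_notMem {ι : Type*} [Fintype ι] {a c : ℝ} {S : Finset ι} {p : ι}
    (ha : 0 ≤ a) (hc : c ≤ 1) (hp : p ∉ S) :
    a * c * #S ≤ a * (Fintype.card ι - 1) := by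
  have hS : ((#S + 1 : ℕ) : ℝ) ≤ Fintype.card ι := by exact_mod_cast card_lt_univ_of_notMem hp
  push_cast at hS
  rw [mul_assoc]
  exact mul_le_mul_of_nonneg_left
    ((mul_le_of_le_one_left (Nat.cast_nonneg _) hc).trans (by linarith)) ha

lemma abs_le_of_contraction {ι : Type*} {x : ℕ → ι → ℝ} {M γ ζ₀ : ℝ} {i : ι} (hγ : 0 ≤ γ)
    (hbound : ∀ j, |x 0 j| ≤ M)
    (hstep : ∀ k p ζ, (∀ j, |x k j| ≤ M) → |x k p| ≤ ζ * M → ζ ≤ 1 →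
      |x (k + 1) p| ≤ (1 - (1 - ζ) * γ) * M)
    (hζ₀ : ζ₀ ≤ 1) (hi : |x 0 i| ≤ ζ₀ * M) (k : ℕ) :
    |x k i| ≤ (1 - (1 - ζ₀) * γ ^ k) * M := by
  have hbounded : ∀ k j, |x k j| ≤ M := by
    intro k
    induction k with
    | zero => exact hbound
    | succ k ih => exact fun j => by simpa using hstep k j 1 ih (by simpa using ih j) le_rfl
  induction k with
  | zero => simpa using hi
  | succ k ih =>
    have hζk : 1 - (1 - ζ₀) * γ ^ k ≤ 1 :=
      sub_le_self _ (mul_nonneg (sub_nonneg.mpr hζ₀) (pow_nonneg hγ k))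
    convert hstep k i _ (hbounded k) ih hζk using 2
    ring

theorem state_flipping_small_state_stays_small_general
    {n : ℕ} (hn : 3 ≤ n)
    (α β : ℝ) (hα : 0 < α) (hβ : 0 < β)
    (hαβ : α + β ≤ 1 / ((n : ℝ) - 1))
    (Np Nd : ℕ → Fin n → Finset (Fin n))
    (hNp : ∀ t i, i ∉ Np t i) (hNd : ∀ t i, i ∉ Nd t i)
    (B D : ℕ → ℝ) (hB : ∀ t, B t = 0 ∨ B t = 1) (hD : ∀ t, D t = 0 ∨ D t = 1)
    (s : ℕ → Fin n → ℝ)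
    (hupd : ∀ t i, s (t + 1) i = s t i - α * B t * (∑ j ∈ Np t i, (s t i - s t j))
        - β * D t * (∑ j ∈ Nd t i, (s t i + s t j)))
    (t : ℕ) (i : Fin n) (ζ₀ : ℝ) (hζ₁ : ζ₀ < 1)
    (hi : |s t i| ≤ ζ₀ * Mmax hn (s t)) :
    ∀ k : ℕ, |s (t + k) i| ≤
      (1 - (1 - ζ₀) * (1 - (α + β) * ((n : ℝ) - 1)) ^ k) * Mmax hn (s t) := by
  have hn1 : (0 : ℝ) < n - 1 := by
    have : (3 : ℝ) ≤ n := by exact_mod_cast hn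
    linarith
  have hγ : 0 ≤ 1 - (α + β) * ((n : ℝ) - 1) := by
    rw [sub_nonneg, ← le_div_iff₀ hn1]
    exact hαβ
  have hunit (c : ℝ) (hc : c = 0 ∨ c = 1) : 0 ≤ c ∧ c ≤ 1 := by rcases hc with rfl | rfl <;> norm_num
  have hθ (τ : ℕ) (p : Fin n) :
      α * B τ * #(Np τ p) + β * D τ * #(Nd τ p) ≤ 1 - (1 - (α + β) * ((n : ℝ) - 1)) := by
    have hp := mul_mul_card_le_of_notMem hα.le (hunit _ (hB τ)).2 (hNp τ p)
    have hd := mul_mul_card_le_of_notMem hβ.le (hunit _ (hD τ)).2 (hNd τ p)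
    rw [Fintype.card_fin] at hp hd
    linarith
  refine abs_le_of_contraction (x := fun k => s (t + k)) hγ (abs_le_Mmax hn _) ?_ hζ₁.le hi
  intro k p ζ hbound hp hζ
  rw [← add_assoc, hupd]
  exact abs_flipStep_le_of_abs_le (mul_nonneg hα.le (hunit _ (hB _)).1)
    (mul_nonneg hβ.le (hunit _ (hD _)).1) hγ (hθ _ p) hbound hp hζ

/-- if `α + β ≤ 1/(n-1)`, `γ_* = 1 - (α+β)(n-1)` and
`|s_i(t)| ≤ ζ₀·M(t)` with `0 < ζ₀ < 1`, then along every realization of the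
state-flipping dynamics, `|s_i(t+k)| ≤ (1 - (1-ζ₀)·γ_*^k)·M(t)` for all `k`. -/
theorem state_flipping_small_state_stays_small
    {n : ℕ} (hn : 3 ≤ n)
    (α β : ℝ) (hα : 0 < α) (hβ : 0 < β)
    (hαβ : α + β ≤ 1 / ((n : ℝ) - 1))
    (Np Nd : ℕ → Fin n → Finset (Fin n))
    (hNp : ∀ t i, i ∉ Np t i) (hNd : ∀ t i, i ∉ Nd t i)
    (hdisj : ∀ t i, Disjoint (Np t i) (Nd t i))
    (B D : ℕ → ℝ) (hB : ∀ t, B t = 0 ∨ B t = 1) (hD : ∀ t, D t = 0 ∨ D t = 1)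
    (s : ℕ → Fin n → ℝ)
    (hupd : ∀ t i, s (t + 1) i = s t i - α * B t * (∑ j ∈ Np t i, (s t i - s t j))
        - β * D t * (∑ j ∈ Nd t i, (s t i + s t j)))
    (t : ℕ) (i : Fin n) (ζ₀ : ℝ) (hζ₀ : 0 < ζ₀) (hζ₁ : ζ₀ < 1)
    (hi : |s t i| ≤ ζ₀ * Mmax hn (s t)) :
    ∀ k : ℕ, |s (t + k) i| ≤
      (1 - (1 - ζ₀) * (1 - (α + β) * ((n : ℝ) - 1)) ^ k) * Mmax hn (s t) :=
  state_flipping_small_state_stays_small_general hn α β hα hβ hαβ Np Nd hNp hNd B D hB hD s hupd t i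
    ζ₀ hζ₁ hi
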